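/- arXiv:1905.03215 — 2 statements merged into one kernel-verified Lean document; each statement's English description precedes it below -/
import Mathlib

section
/- For every finitely supported c : ℤ[i] → ℂ and every integer q ≥ 1 one has S'_q = (1/q)·Σ_{a mod q} |Σ_{z = u+iv ∈ ℤ[i], gcd(v,q)=1} c(z)·e(a·u·v*/q)|², where v* denotes the multiplicative inverse of v modulo q; in particular S'_q is real and nonnegative. Moreover, if c is supported on primitive Gaussian integers z = u + iv with gcd(u,v) = 1 and v ≠ 0, then S'_q ≤ S_q. -/
open scoped ComplexConjugate
open scoped Classical

noncomputable section

/-- `z = u+iv` is *odd primitive*: `u ≢ v (mod 2)`, `gcd(u,v) = 1`, `uv ≠ 0`. -/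
def OddPrimitive (z : GaussianInt) : Prop :=
  ¬ z.re ≡ z.im [ZMOD 2] ∧ Int.gcd z.re z.im = 1 ∧ z.re * z.im ≠ 0

/-- The determinant sum `S_q = ∑_{u₁v₂ ≡ u₂v₁ (mod q)} c(z₁) conj (c(z₂))`. -/
def detSum (c : GaussianInt → ℂ) (q : ℕ) : ℂ :=
  ∑ᶠ z₁ : GaussianInt, ∑ᶠ z₂ : GaussianInt,
    if (q : ℤ) ∣ (z₁.re * z₂.im - z₂.re * z₁.im) then c z₁ * conj (c z₂) else 0

/-- The reduced determinant sum `S'_q`, with the extra condition `gcd(v₁v₂, q) = 1`. -/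
def detSum' (c : GaussianInt → ℂ) (q : ℕ) : ℂ :=
  ∑ᶠ z₁ : GaussianInt, ∑ᶠ z₂ : GaussianInt,
    if (q : ℤ) ∣ (z₁.re * z₂.im - z₂.re * z₁.im) ∧ Int.gcd (z₁.im * z₂.im) q = 1
    then c z₁ * conj (c z₂) else 0

/-- `S(Q,X) = ∑_{1 ≤ q ≤ Q} S_q` (the dependence on `X` is through the support of `c`). -/
def SQX (c : GaussianInt → ℂ) (Q : ℝ) : ℂ :=
  ∑ q ∈ Finset.Icc 1 ⌊Q⌋₊, detSum c q

/-- `c` is supported on odd primitive Gaussian integers `z` with `1 < |z|² ≤ X`. -/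
def SuppOK (c : GaussianInt → ℂ) (X : ℝ) : Prop :=
  ∀ z : GaussianInt, c z ≠ 0 →
    OddPrimitive z ∧ 1 < (Zsqrtd.norm z : ℝ) ∧ (Zsqrtd.norm z : ℝ) ≤ X

/-- The Siegel–Walfisz condition with exponent `B` and constant `K`. -/
def SWCond (c : GaussianInt → ℂ) (X B K : ℝ) : Prop :=
  ∀ (k ℓ : ℕ), 1 ≤ ℓ → ∀ (α : GaussianInt) (t : ℝ),
    ‖∑ᶠ z : GaussianInt,
        if z ≠ 0 ∧ (ℓ : GaussianInt) ∣ (z - α) then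
          c z * (conj (GaussianInt.toComplex z) / GaussianInt.toComplex z) ^ k *
            (‖GaussianInt.toComplex z‖ : ℂ) ^ ((t : ℂ) * Complex.I)
        else 0‖
      ≤ K * (ℓ : ℝ) ^ 2 * ((k : ℝ) ^ 2 + 1) * (t ^ 2 + 1) * X * Real.log X ^ (-B)

/-- The additive character `x ↦ e(x/q)` on `ℤ/qℤ`. -/
def eChar (q : ℕ) (x : ZMod q) : ℂ :=
  Complex.exp (2 * Real.pi * Complex.I * ((x.val : ℂ) / (q : ℂ)))

/-!
Expanding the square and using orthogonality of additive characters modulo `q`, the right-hand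
side becomes the sum of `c(z₁) c̄(z₂)` over the pairs with `u₁ v₁* ≡ u₂ v₂* (mod q)`, which for
`v₁, v₂` prime to `q` is the determinant condition. For primitive `z₁, z₂`, `q ∣ u₁v₂ − u₂v₁`
forces `gcd(v₁, q) = gcd(v₂, q)`, so `S_q` splits into blocks indexed by `d ∣ q`. Writing `v = d w`
with `w` prime to `q/d`, block `d` is the same kind of square mean modulo `q/d`, hence
nonnegative, and `S'_q` is the block `d = 1`.
-/

open Finset ComplexOrder

lemma eChar_eq_stdAddChar (q : ℕ) [NeZero q] (x : ZMod q) : eChar q x = ZMod.stdAddChar x := by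
  rw [ZMod.stdAddChar_apply, ZMod.toCircle_apply, eChar, mul_div_assoc]

lemma Finset.sum_range_eq_sum_zmod {M : Type*} [AddCommMonoid M] (Q : ℕ) [NeZero Q]
    (g : ZMod Q → M) : ∑ a ∈ range Q, g a = ∑ x : ZMod Q, g x :=
  sum_nbij' (fun a => (a : ZMod Q)) ZMod.val (by simp) (fun x _ => mem_range.2 x.val_lt)
    (fun a ha => ZMod.val_cast_of_lt (mem_range.1 ha)) (fun x _ => ZMod.natCast_zmod_val x)
    (fun _ _ => rfl)

lemma sum_range_eChar_mul_conj (Q : ℕ) [NeZero Q] (x y : ZMod Q) :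
    ∑ a ∈ range Q, eChar Q (a * x) * conj (eChar Q (a * y)) = if x = y then (Q : ℂ) else 0 := by
  simp_rw [eChar_eq_stdAddChar, ← AddChar.map_neg_eq_conj, ← AddChar.map_add_eq_mul,
    ← sub_eq_add_neg, ← mul_sub]
  rw [sum_range_eq_sum_zmod Q (fun a => ZMod.stdAddChar (a * (x - y))),
    AddChar.sum_mulShift _ (ZMod.isPrimitive_stdAddChar Q)]
  simp [sub_eq_zero]

lemma sum_sum_ite_eq_eq_mean_norm_sq {ι : Type*} (Q : ℕ) [NeZero Q] (s : Finset ι) (f : ι → ℂ)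
    (x : ι → ZMod Q) :
    ∑ i ∈ s, ∑ j ∈ s, (if x i = x j then f i * conj (f j) else 0) =
      (((Q : ℝ)⁻¹ * ∑ a ∈ range Q, ‖∑ i ∈ s, f i * eChar Q (a * x i)‖ ^ 2 : ℝ) : ℂ) := by
  have hQ : (Q : ℂ) ≠ 0 := NeZero.ne _
  calc ∑ i ∈ s, ∑ j ∈ s, (if x i = x j then f i * conj (f j) else 0)
      = ∑ i ∈ s, ∑ j ∈ s, f i * conj (f j) *
          ((Q : ℂ)⁻¹ * ∑ a ∈ range Q, eChar Q (a * x i) * conj (eChar Q (a * x j))) := by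
        simp_rw [sum_range_eChar_mul_conj, mul_ite, mul_zero, inv_mul_cancel₀ hQ, mul_one]
    _ = (Q : ℂ)⁻¹ * ∑ a ∈ range Q, (∑ i ∈ s, f i * eChar Q (a * x i)) *
          conj (∑ i ∈ s, f i * eChar Q (a * x i)) := by
        simp_rw [map_sum, map_mul, sum_mul_sum, mul_sum]
        conv_rhs => rw [sum_comm]; enter [2, i]; rw [sum_comm]
        exact sum_congr rfl fun i _ => sum_congr rfl fun j _ => sum_congr rfl fun a _ => by ring
    _ = _ := by simp_rw [Complex.mul_conj']; push_cast; rfl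

lemma ZMod.intCast_mul_inv_eq_intCast_mul_inv_iff {Q : ℕ} {u₁ w₁ u₂ w₂ : ℤ}
    (h₁ : IsCoprime w₁ Q) (h₂ : IsCoprime w₂ Q) :
    (u₁ : ZMod Q) * (w₁ : ZMod Q)⁻¹ = u₂ * (w₂ : ZMod Q)⁻¹ ↔ (Q : ℤ) ∣ u₁ * w₂ - u₂ * w₁ := by
  have i₁ := ZMod.coe_int_mul_inv_eq_one h₁
  have i₂ := ZMod.coe_int_mul_inv_eq_one h₂
  rw [← ZMod.intCast_zmod_eq_zero_iff_dvd]
  push_cast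
  constructor <;> intro h
  · linear_combination (w₁ * w₂ : ZMod Q) * h - (u₁ * w₂ : ZMod Q) * i₁ + (u₂ * w₁ : ZMod Q) * i₂
  · linear_combination ((w₁ : ZMod Q)⁻¹ * (w₂ : ZMod Q)⁻¹) * h - (u₁ * (w₁ : ZMod Q)⁻¹) * i₂
      + (u₂ * (w₂ : ZMod Q)⁻¹) * i₁

lemma Int.exists_eq_mul_isCoprime_of_gcd_mul_eq {v : ℤ} {d Q : ℕ} (hd : d ≠ 0)
    (h : Int.gcd v (d * Q : ℕ) = d) : ∃ w : ℤ, v = d * w ∧ IsCoprime w Q := by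
  obtain ⟨w, rfl⟩ : (d : ℤ) ∣ v := h ▸ Int.gcd_dvd_left _ _
  refine ⟨w, rfl, Int.isCoprime_iff_gcd_eq_one.2 ?_⟩
  push_cast at h
  rw [Int.gcd_mul_left, Int.natAbs_natCast] at h
  exact (Nat.mul_eq_left hd).1 h

-- For `d = 1` this is the phase `u v*` of the exponential sum in the theorem.
def slopeMod (Q d : ℕ) (z : GaussianInt) : ZMod Q :=
  (z.re : ZMod Q) * ((z.im / d : ℤ) : ZMod Q)⁻¹

lemma dvd_cross_iff_slopeMod_eq {q d Q : ℕ} (hq : q = d * Q) (hd : d ≠ 0) {z₁ z₂ : GaussianInt}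
    (h₁ : Int.gcd z₁.im q = d) (h₂ : Int.gcd z₂.im q = d) :
    (q : ℤ) ∣ z₁.re * z₂.im - z₂.re * z₁.im ↔ slopeMod Q d z₁ = slopeMod Q d z₂ := by
  subst hq
  have hd' : (d : ℤ) ≠ 0 := Int.natCast_ne_zero.2 hd
  obtain ⟨w₁, hw₁, hc₁⟩ := Int.exists_eq_mul_isCoprime_of_gcd_mul_eq hd h₁
  obtain ⟨w₂, hw₂, hc₂⟩ := Int.exists_eq_mul_isCoprime_of_gcd_mul_eq hd h₂
  have hcross : z₁.re * (d * w₂) - z₂.re * (d * w₁) = d * (z₁.re * w₂ - z₂.re * w₁) := by ring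
  rw [slopeMod, slopeMod, hw₁, hw₂, Int.mul_ediv_cancel_left _ hd', Int.mul_ediv_cancel_left _ hd',
    hcross, Nat.cast_mul, mul_dvd_mul_iff_left hd',
    ZMod.intCast_mul_inv_eq_intCast_mul_inv_iff hc₁ hc₂]

lemma gcd_im_dvd_of_dvd_cross {q : ℕ} {z₁ z₂ : GaussianInt} (h₁ : Int.gcd z₁.re z₁.im = 1)
    (h : (q : ℤ) ∣ z₁.re * z₂.im - z₂.re * z₁.im) :
    Int.gcd z₁.im q ∣ Int.gcd z₂.im q := by
  set D : ℤ := ((Int.gcd z₁.im q : ℕ) : ℤ)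
  have hD₁ : D ∣ z₁.im := Int.gcd_dvd_left _ _
  have hDq : D ∣ q := Int.gcd_dvd_right _ _
  have hDuv : D ∣ z₁.re * z₂.im := by
    simpa using dvd_add (hDq.trans h) (hD₁.mul_left z₂.re)
  have hDu : IsCoprime D z₁.re :=
    ((Int.isCoprime_iff_gcd_eq_one.2 h₁).of_isCoprime_of_dvd_right hD₁).symm
  exact Int.natCast_dvd_natCast.1 (Int.dvd_coe_gcd (hDu.dvd_of_dvd_mul_left hDuv) hDq)

lemma gcd_im_eq_of_dvd_cross {q : ℕ} {z₁ z₂ : GaussianInt} (h₁ : Int.gcd z₁.re z₁.im = 1)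
    (h₂ : Int.gcd z₂.re z₂.im = 1) (h : (q : ℤ) ∣ z₁.re * z₂.im - z₂.re * z₁.im) :
    Int.gcd z₁.im q = Int.gcd z₂.im q :=
  Nat.dvd_antisymm (gcd_im_dvd_of_dvd_cross h₁ h)
    (gcd_im_dvd_of_dvd_cross h₂ (by simpa using h.neg_right))

lemma finsum_finsum_ite_mul_conj {α : Type*} {c : α → ℂ} (hc : (Function.support c).Finite)
    (P : α → α → Prop) [DecidableRel P] :
    ∑ᶠ x, ∑ᶠ y, (if P x y then c x * conj (c y) else 0) =
      ∑ x ∈ hc.toFinset, ∑ y ∈ hc.toFinset, if P x y then c x * conj (c y) else 0 := by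
  have hsupp : ∀ {g : α → ℂ}, (∀ x, c x = 0 → g x = 0) → Function.support g ⊆ hc.toFinset :=
    fun hg x hx => by simpa using mt (hg x) hx
  rw [finsum_eq_sum_of_support_subset _ (hsupp fun x hx => finsum_eq_zero_of_forall_eq_zero
    fun y => by simp [hx])]
  exact sum_congr rfl fun x _ => finsum_eq_sum_of_support_subset _ (hsupp fun y hy => by simp [hy])

def detSumOn (s : Finset GaussianInt) (c : GaussianInt → ℂ) (q : ℕ) : ℂ :=
  ∑ z₁ ∈ s, ∑ z₂ ∈ s,
    if (q : ℤ) ∣ (z₁.re * z₂.im - z₂.re * z₁.im) then c z₁ * conj (c z₂) else 0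

lemma detSum_eq_detSumOn {c : GaussianInt → ℂ} (hfin : (Function.support c).Finite) (q : ℕ) :
    detSum c q = detSumOn hfin.toFinset c q :=
  finsum_finsum_ite_mul_conj hfin _

lemma detSum'_eq_detSumOn {c : GaussianInt → ℂ} (hfin : (Function.support c).Finite) (q : ℕ) :
    detSum' c q = detSumOn {z ∈ hfin.toFinset | Int.gcd z.im q = 1} c q := by
  rw [detSum', finsum_finsum_ite_mul_conj hfin, detSumOn, sum_filter]
  refine sum_congr rfl fun z₁ _ => ?_
  rw [sum_filter, ite_sum_zero]
  refine sum_congr rfl fun z₂ _ => ?_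
  simp only [← Int.isCoprime_iff_gcd_eq_one, IsCoprime.mul_left_iff]
  split_ifs <;> tauto

lemma detSumOn_eq_of_gcd_eq {q d Q : ℕ} [NeZero Q] (hq : q = d * Q) (hd : d ≠ 0)
    {s : Finset GaussianInt} (hs : ∀ z ∈ s, Int.gcd z.im q = d) (c : GaussianInt → ℂ) :
    detSumOn s c q = (((Q : ℝ)⁻¹ * ∑ a ∈ range Q,
      ‖∑ z ∈ s, c z * eChar Q (a * slopeMod Q d z)‖ ^ 2 : ℝ) : ℂ) := by
  rw [← sum_sum_ite_eq_eq_mean_norm_sq, detSumOn]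
  exact sum_congr rfl fun z₁ h₁ => sum_congr rfl fun z₂ h₂ =>
    if_congr (dvd_cross_iff_slopeMod_eq hq hd (hs z₁ h₁) (hs z₂ h₂)) rfl rfl

lemma detSumOn_nonneg_of_gcd_eq {q d : ℕ} (hq : q ≠ 0) (hd : d ∣ q) {s : Finset GaussianInt}
    (hs : ∀ z ∈ s, Int.gcd z.im q = d) (c : GaussianInt → ℂ) : 0 ≤ detSumOn s c q := by
  obtain ⟨Q, rfl⟩ := hd
  have : NeZero Q := ⟨right_ne_zero_of_mul hq⟩
  rw [detSumOn_eq_of_gcd_eq rfl (left_ne_zero_of_mul hq) hs]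
  exact Complex.zero_le_real.2 (by positivity)

lemma Finset.sum_sum_ite_eq_sum_fiberwise {ι κ M : Type*} [AddCommMonoid M] [DecidableEq κ]
    {s : Finset ι} {t : Finset κ} {k : ι → κ} (hk : ∀ i ∈ s, k i ∈ t) (R : ι → ι → Prop)
    [DecidableRel R] (hR : ∀ i ∈ s, ∀ j ∈ s, R i j → k i = k j) (g : ι → ι → M) :
    ∑ i ∈ s, ∑ j ∈ s, (if R i j then g i j else 0) =
      ∑ e ∈ t, ∑ i ∈ s with k i = e, ∑ j ∈ s with k j = e, if R i j then g i j else 0 := by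
  rw [← sum_fiberwise_of_maps_to hk]
  refine sum_congr rfl fun e _ => sum_congr rfl fun i hi => ?_
  rw [sum_filter]
  refine sum_congr rfl fun j hj => ?_
  obtain ⟨his, rfl⟩ := mem_filter.1 hi
  by_cases hij : R i j
  · simp [hij, (hR i his j hj hij).symm]
  · simp [hij]

lemma detSumOn_eq_sum_divisors {q : ℕ} (hq : q ≠ 0) {s : Finset GaussianInt}
    (hs : ∀ z ∈ s, Int.gcd z.re z.im = 1) (c : GaussianInt → ℂ) :
    detSumOn s c q = ∑ d ∈ q.divisors, detSumOn {z ∈ s | Int.gcd z.im q = d} c q := by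
  unfold detSumOn
  exact Finset.sum_sum_ite_eq_sum_fiberwise (k := fun z => Int.gcd z.im q)
    (fun z _ => Nat.mem_divisors.2 ⟨Int.natCast_dvd_natCast.1 (Int.gcd_dvd_right z.im q), hq⟩)
    (fun z₁ z₂ => (q : ℤ) ∣ z₁.re * z₂.im - z₂.re * z₁.im)
    (fun z₁ h₁ z₂ h₂ => gcd_im_eq_of_dvd_cross (hs z₁ h₁) (hs z₂ h₂))
    fun z₁ z₂ => c z₁ * conj (c z₂)

/-- **Identity (1.12).** `S'_q = q⁻¹ ∑_{a mod q} |∑_{(v,q)=1} c(z) e(a u v̄ / q)|²`; in particular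
`S'_q` is real and nonnegative.  Moreover if `c` is supported on primitive Gaussian integers
then `S'_q ≤ S_q` (the latter being real as well). -/
theorem detSum'_eq_square_mean (c : GaussianInt → ℂ) (hfin : (Function.support c).Finite)
    (q : ℕ) (hq : 1 ≤ q) :
    detSum' c q = (((q : ℝ)⁻¹ * ∑ a ∈ Finset.range q,
        ‖∑ᶠ z : GaussianInt,
          if Int.gcd z.im q = 1 then
            c z * eChar q ((a : ZMod q) * (z.re : ZMod q) * ((z.im : ZMod q))⁻¹)
          else 0‖ ^ 2 : ℝ) : ℂ) ∧
    ((∀ z : GaussianInt, c z ≠ 0 → Int.gcd z.re z.im = 1 ∧ z.im ≠ 0) →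
      (detSum c q).im = 0 ∧ (detSum' c q).re ≤ (detSum c q).re) := by
  have hq₀ : q ≠ 0 := Nat.one_le_iff_ne_zero.1 hq
  have : NeZero q := ⟨hq₀⟩
  set s := hfin.toFinset
  have hs₁ : ∀ z ∈ {z ∈ s | Int.gcd z.im q = 1}, Int.gcd z.im q = 1 :=
    fun z hz => (mem_filter.1 hz).2
  have h₀ : 0 ≤ detSum' c q := by
    rw [detSum'_eq_detSumOn hfin]
    exact detSumOn_nonneg_of_gcd_eq hq₀ (one_dvd q) hs₁ c
  refine ⟨?_, fun hprim => ?_⟩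
  · rw [detSum'_eq_detSumOn hfin, detSumOn_eq_of_gcd_eq (one_mul q).symm one_ne_zero hs₁]
    congr 4 with a
    rw [finsum_eq_sum_of_support_subset (s := s) _ fun z hz => by
      simpa [s] using mt (fun hc : c z = 0 => by simp [hc]) hz, sum_filter]
    simp [slopeMod, mul_assoc]
  · have hle : detSum' c q ≤ detSum c q := by
      rw [detSum'_eq_detSumOn hfin, detSum_eq_detSumOn hfin, detSumOn_eq_sum_divisors hq₀
        fun z hz => (hprim z (hfin.mem_toFinset.1 hz)).1]
      exact single_le_sum (fun d hd => detSumOn_nonneg_of_gcd_eq hq₀ (Nat.dvd_of_mem_divisors hd)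
        (fun z hz => (mem_filter.1 hz).2) c) (Nat.one_mem_divisors.2 hq₀)
    exact ⟨(Complex.le_def.1 (h₀.trans hle)).2.symm, (Complex.le_def.1 hle).1⟩
end
end

section
/- For every real B > 0 there exists B' > 0 such that for every K ≥ 1 there is a constant C = C(B,K) with the following property. Let X ≥ 2 and let c : ℤ[i] → ℂ be supported on Gaussian integers z with 1 < |z|² ≤ X, satisfy |c(z)| ≤ 1, and satisfy the Siegel–Walfisz condition with exponent B' and constant K. Then for all integers e ≥ 1, k ≥ 0, ℓ ≥ 1, all α ∈ ℤ[i] and all real t, |Σ_{z = u+iv ∈ ℤ[i], z ≡ α (mod ℓ), gcd(v, e) = 1} c(z)·(conj(z)/z)^k·|z|^{it}| ≤ C·τ(e)·ℓ²·(k²+1)·(t²+1)·X·(log X)^{−B}, where τ(e) is the number of positive divisors of e. -/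
open scoped ComplexConjugate
open scoped Classical

noncomputable section

/-!
Möbius inversion over `d ∣ e` replaces the condition `gcd(v, e) = 1` by `d ∣ v`. For
`d ≤ (log X)^B`, the class `z ≡ α (mod ℓ)` splits into `d²` classes modulo `ℓd`, on each of which
`d ∣ v` is constant; the Siegel–Walfisz condition with exponent `5B` bounds each of them by
`K (ℓd)² (k²+1)(t²+1) X (log X)^(-5B)`, and `d⁴ ≤ (log X)^(4B)` absorbs the loss. For
`d > (log X)^B`, the trivial bound by the `O(X/d + √X)` lattice points with `d ∣ v` suffices,
because `(log X)^B ≤ (2B)^B √X`.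
-/

open scoped ArithmeticFunction.Moebius
open Finset

theorem Nat.sum_divisors_moebius (m : ℕ) :
    ∑ d ∈ m.divisors, (μ d : ℂ) = if m = 1 then 1 else 0 := by
  have h := congrArg (· m) (ArithmeticFunction.coe_moebius_mul_coe_zeta (R := ℂ))
  simp only [ArithmeticFunction.coe_mul_zeta_apply, ArithmeticFunction.one_apply] at h
  simpa using h

theorem Nat.sum_divisors_filter_dvd_moebius {e : ℕ} (he : e ≠ 0) (n : ℤ) :
    ∑ d ∈ e.divisors with d ∣ n.natAbs, (μ d : ℂ) = if Int.gcd n e = 1 then 1 else 0 := by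
  have hfilter : {d ∈ e.divisors | d ∣ n.natAbs} = (Int.gcd n e).divisors := by
    ext d
    simp only [mem_filter, Nat.mem_divisors, Int.gcd, Int.natAbs_natCast, Nat.dvd_gcd_iff]
    have : n.natAbs.gcd e ≠ 0 := Nat.gcd_ne_zero_right he
    tauto
  rw [hfilter, Nat.sum_divisors_moebius]

theorem Finset.sum_ite_gcd_eq_one_eq_sum_moebius {ι : Type*} (s : Finset ι) (P : ι → Prop)
    [DecidablePred P] (g : ι → ℤ) (f : ι → ℂ) {e : ℕ} (he : e ≠ 0) :
    ∑ i ∈ s, (if P i ∧ Int.gcd (g i) e = 1 then f i else 0) =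
      ∑ d ∈ e.divisors, (μ d : ℂ) * ∑ i ∈ s, if P i ∧ (d : ℤ) ∣ g i then f i else 0 := by
  simp_rw [mul_sum]
  rw [sum_comm]
  refine sum_congr rfl fun i _ => ?_
  by_cases hP : P i
  · simp only [hP, true_and, mul_ite, mul_zero, ← sum_filter, Int.natCast_dvd, ← sum_mul,
      Nat.sum_divisors_filter_dvd_moebius he, ite_mul, one_mul, zero_mul]
  · simp [hP]

theorem Finset.norm_sum_moebius_mul_le {s : Finset ℕ} {T : ℕ → ℂ} {M : ℝ}
    (hT : ∀ d ∈ s, ‖T d‖ ≤ M) : ‖∑ d ∈ s, (μ d : ℂ) * T d‖ ≤ #s * M := by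
  refine (norm_sum_le _ _).trans ?_
  rw [← nsmul_eq_mul]
  refine sum_le_card_nsmul _ _ _ fun d hd => ?_
  rw [norm_mul, Complex.norm_intCast]
  calc |(μ d : ℝ)| * ‖T d‖ ≤ 1 * M := by
        gcongr
        · exact_mod_cast ArithmeticFunction.abs_moebius_le_one
        · exact hT d hd
    _ = M := one_mul M

theorem Int.dvd_sub_iff_eq_emod {d a b : ℤ} (hb : 0 ≤ b) (hbd : b < d) : d ∣ a - b ↔ b = a % d := by
  rw [← Int.modEq_iff_dvd, Int.ModEq, Int.emod_eq_of_lt hb hbd]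

theorem GaussianInt.sum_ite_dvd_sub_mk {M : Type*} [AddCommMonoid M] {d : ℕ} (hd : 0 < d)
    (w : GaussianInt) (x : M) :
    ∑ p ∈ Ico (0 : ℤ) d ×ˢ Ico (0 : ℤ) d,
      (if (d : GaussianInt) ∣ w - ⟨p.1, p.2⟩ then x else 0) = x := by
  have hd' : (0 : ℤ) < d := by exact_mod_cast hd
  have hdvd : ∀ p ∈ Ico (0 : ℤ) d ×ˢ Ico (0 : ℤ) d,
      (d : GaussianInt) ∣ w - ⟨p.1, p.2⟩ ↔ (w.re % d, w.im % d) = p := by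
    rintro ⟨a, b⟩ hp
    simp only [mem_product, mem_Ico] at hp
    rw [show ((d : ℕ) : GaussianInt) = ((d : ℤ) : GaussianInt) by norm_cast, Zsqrtd.intCast_dvd]
    simp only [Zsqrtd.re_sub, Zsqrtd.im_sub, Int.dvd_sub_iff_eq_emod hp.1.1 hp.1.2,
      Int.dvd_sub_iff_eq_emod hp.2.1 hp.2.2, Prod.mk.injEq]
    tauto
  rw [sum_congr rfl fun p hp => if_congr (hdvd p hp) rfl rfl, sum_ite_eq]
  simp [Int.emod_nonneg _ hd'.ne', Int.emod_lt_of_pos _ hd']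

theorem GaussianInt.ite_dvd_sub_eq_sum {M : Type*} [AddCommMonoid M] {ℓ d : ℕ} (hℓ : ℓ ≠ 0)
    (hd : 0 < d) (α z : GaussianInt) (x : M) :
    (if (ℓ : GaussianInt) ∣ z - α then x else 0) =
      ∑ p ∈ Ico (0 : ℤ) d ×ˢ Ico (0 : ℤ) d,
        if ((ℓ * d : ℕ) : GaussianInt) ∣ z - (α + ℓ * ⟨p.1, p.2⟩) then x else 0 := by
  have hℓ' : (ℓ : GaussianInt) ≠ 0 := by exact_mod_cast hℓ
  split_ifs with h
  · obtain ⟨w, hw⟩ := h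
    have hshift : ∀ β : GaussianInt, z - (α + ℓ * β) = ℓ * (w - β) := fun β => by
      rw [mul_sub, ← hw]; ring
    simp only [hshift, Nat.cast_mul, mul_dvd_mul_iff_left hℓ']
    exact (GaussianInt.sum_ite_dvd_sub_mk hd w x).symm
  · refine (sum_eq_zero fun p _ => if_neg fun hp => h ?_).symm
    have hℓβ : (ℓ : GaussianInt) ∣ z - (α + ℓ * ⟨p.1, p.2⟩) :=
      (Nat.cast_dvd_cast (dvd_mul_right ℓ d)).trans hp
    simpa [sub_add_eq_sub_sub] using hℓβ.add (dvd_mul_right (ℓ : GaussianInt) ⟨p.1, p.2⟩)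

theorem GaussianInt.dvd_im_iff_of_dvd_sub {d : ℤ} {z β : GaussianInt}
    (h : (d : GaussianInt) ∣ z - β) : d ∣ z.im ↔ d ∣ β.im := by
  rw [Zsqrtd.intCast_dvd, Zsqrtd.im_sub] at h
  exact dvd_iff_dvd_of_dvd_sub h.2

theorem GaussianInt.norm_sum_ite_dvd_sub_and_dvd_im_le {s : Finset GaussianInt}
    {f : GaussianInt → ℂ} {A : ℝ}
    (hA : ∀ m : ℕ, 0 < m → ∀ β : GaussianInt,
      ‖∑ z ∈ s, if (m : GaussianInt) ∣ z - β then f z else 0‖ ≤ A * m ^ 2)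
    {ℓ d : ℕ} (hℓ : 0 < ℓ) (hd : 0 < d) (α : GaussianInt) :
    ‖∑ z ∈ s, if (ℓ : GaussianInt) ∣ z - α ∧ (d : ℤ) ∣ z.im then f z else 0‖ ≤
      d ^ 2 * (A * (ℓ * d) ^ 2) := by
  have hA0 : 0 ≤ A := by simpa using (_root_.norm_nonneg _).trans (hA 1 one_pos 0)
  set box := Ico (0 : ℤ) d ×ˢ Ico (0 : ℤ) d
  have hclass : ∀ p ∈ box, ‖∑ z ∈ s, if ((ℓ * d : ℕ) : GaussianInt) ∣ z - (α + ℓ * ⟨p.1, p.2⟩)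
      then (if (d : ℤ) ∣ z.im then f z else 0) else 0‖ ≤ A * (ℓ * d) ^ 2 := by
    intro p _
    set β : GaussianInt := α + ℓ * ⟨p.1, p.2⟩
    have hdβ : ∀ z, ((ℓ * d : ℕ) : GaussianInt) ∣ z - β → ((d : ℤ) ∣ z.im ↔ (d : ℤ) ∣ β.im) :=
      fun z h => GaussianInt.dvd_im_iff_of_dvd_sub <|
        (show ((d : ℤ) : GaussianInt) ∣ ((ℓ * d : ℕ) : GaussianInt) by
          exact_mod_cast dvd_mul_left d ℓ).trans h
    by_cases hβ : (d : ℤ) ∣ β.im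
    · have hmod := hA (ℓ * d) (Nat.mul_pos hℓ hd) β
      rw [sum_congr rfl fun z _ => ite_congr rfl (fun h => if_pos ((hdβ z h).2 hβ)) fun _ => rfl]
      exact_mod_cast hmod
    · rw [sum_eq_zero fun z _ => ite_eq_right_iff.2 fun h => if_neg (mt (hdβ z h).1 hβ), norm_zero]
      positivity
  simp_rw [ite_and, GaussianInt.ite_dvd_sub_eq_sum hℓ.ne' hd α]
  rw [sum_comm]
  calc _ ≤ ∑ p ∈ box, A * (ℓ * d) ^ 2 := (norm_sum_le _ _).trans (sum_le_sum hclass)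
    _ = d ^ 2 * (A * (ℓ * d) ^ 2) := by
      simp [box, sum_const, card_product, sq]

theorem Finset.norm_sum_ite_and_le_card_filter {ι E : Type*} [SeminormedAddCommGroup E]
    (s : Finset ι) (P Q : ι → Prop) [DecidablePred P] [DecidablePred Q] {f : ι → E}
    (hf : ∀ i, ‖f i‖ ≤ 1) :
    ‖∑ i ∈ s, if P i ∧ Q i then f i else 0‖ ≤ #{i ∈ s | Q i} := by
  simp_rw [and_comm (a := P _), ite_and]
  rw [← sum_filter, card_eq_sum_ones, Nat.cast_sum, Nat.cast_one]
  refine norm_sum_le_of_le _ fun i _ => ?_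
  split_ifs
  · exact hf i
  · simp

theorem Int.card_Icc_neg_floor_le {r : ℝ} (hr : 0 ≤ r) : (#(Icc (-⌊r⌋) ⌊r⌋) : ℝ) ≤ 2 * r + 1 := by
  have h0 : 0 ≤ ⌊r⌋ := Int.floor_nonneg.2 hr
  rw [Int.card_Icc, show ⌊r⌋ + 1 - -⌊r⌋ = 2 * ⌊r⌋ + 1 by ring, ← Int.cast_natCast,
    Int.toNat_of_nonneg (by omega)]
  push_cast
  linarith [Int.floor_le r]

theorem Int.mem_Icc_neg_floor_of_abs_le {r : ℝ} {n : ℤ} (h : |(n : ℝ)| ≤ r) :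
    n ∈ Icc (-⌊r⌋) ⌊r⌋ := by
  rw [abs_le] at h
  rw [mem_Icc, neg_le, Int.le_floor, Int.le_floor]
  push_cast
  constructor <;> linarith

theorem GaussianInt.abs_re_le_sqrt_norm (z : GaussianInt) : |(z.re : ℝ)| ≤ √(z.norm : ℝ) :=
  Real.abs_le_sqrt <| by
    rw [Zsqrtd.norm_def]; push_cast; nlinarith [sq_nonneg (z.im : ℝ)]

theorem GaussianInt.abs_im_le_sqrt_norm (z : GaussianInt) : |(z.im : ℝ)| ≤ √(z.norm : ℝ) :=
  Real.abs_le_sqrt <| by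
    rw [Zsqrtd.norm_def]; push_cast; nlinarith [sq_nonneg (z.re : ℝ)]

theorem GaussianInt.finite_setOf_norm_le (X : ℝ) :
    {z : GaussianInt | (z.norm : ℝ) ≤ X}.Finite := by
  refine ((Icc (-⌊√X⌋) ⌊√X⌋ ×ˢ Icc (-⌊√X⌋) ⌊√X⌋).image
    fun p : ℤ × ℤ => (⟨p.1, p.2⟩ : GaussianInt)).finite_toSet.subset fun z hz => ?_
  have hsqrt := Real.sqrt_le_sqrt hz
  exact mem_image.2 ⟨(z.re, z.im), mem_product.2
    ⟨Int.mem_Icc_neg_floor_of_abs_le ((GaussianInt.abs_re_le_sqrt_norm z).trans hsqrt),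
      Int.mem_Icc_neg_floor_of_abs_le ((GaussianInt.abs_im_le_sqrt_norm z).trans hsqrt)⟩, rfl⟩

theorem GaussianInt.card_filter_dvd_im_le {s : Finset GaussianInt} {X : ℝ}
    (hs : ∀ z ∈ s, (z.norm : ℝ) ≤ X) {d : ℕ} (hd : 0 < d) :
    (#{z ∈ s | (d : ℤ) ∣ z.im} : ℝ) ≤ (2 * √X + 1) * (2 * (√X / d) + 1) := by
  have hd' : (0 : ℝ) < d := by exact_mod_cast hd
  have hsub : {z ∈ s | (d : ℤ) ∣ z.im} ⊆
      (Icc (-⌊√X⌋) ⌊√X⌋ ×ˢ Icc (-⌊√X / d⌋) ⌊√X / d⌋).image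
        fun p : ℤ × ℤ => (⟨p.1, d * p.2⟩ : GaussianInt) := by
    intro z hz
    obtain ⟨hzs, b, hb⟩ := mem_filter.1 hz
    have hsqrt := Real.sqrt_le_sqrt (hs z hzs)
    refine mem_image.2 ⟨(z.re, b), mem_product.2 ⟨?_, ?_⟩, by ext <;> simp [hb]⟩
    · exact Int.mem_Icc_neg_floor_of_abs_le ((GaussianInt.abs_re_le_sqrt_norm z).trans hsqrt)
    · refine Int.mem_Icc_neg_floor_of_abs_le ?_
      rw [le_div_iff₀ hd', ← abs_of_pos hd', ← abs_mul, mul_comm]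
      exact_mod_cast (hb ▸ GaussianInt.abs_im_le_sqrt_norm z).trans hsqrt
  calc (#{z ∈ s | (d : ℤ) ∣ z.im} : ℝ)
      ≤ #(Icc (-⌊√X⌋) ⌊√X⌋) * #(Icc (-⌊√X / d⌋) ⌊√X / d⌋) := by
        rw [← Nat.cast_mul, ← card_product]
        exact_mod_cast (card_le_card hsub).trans card_image_le
    _ ≤ (2 * √X + 1) * (2 * (√X / d) + 1) := by
        gcongr
        · exact Int.card_Icc_neg_floor_le (Real.sqrt_nonneg X)
        · exact Int.card_Icc_neg_floor_le (by positivity)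

theorem Real.log_rpow_le_mul_sqrt {X B : ℝ} (hX : 1 ≤ X) (hB : 0 < B) :
    Real.log X ^ B ≤ (2 * B) ^ B * √X := by
  have hlog : Real.log X ≤ 2 * B * X ^ (2 * B)⁻¹ := by
    simpa [div_eq_mul_inv, mul_comm] using
      Real.log_le_rpow_div (by linarith) (inv_pos.2 (mul_pos two_pos hB))
  calc Real.log X ^ B ≤ (2 * B * X ^ (2 * B)⁻¹) ^ B :=
        Real.rpow_le_rpow (Real.log_nonneg hX) hlog hB.le
    _ = (2 * B) ^ B * √X := by
        rw [Real.mul_rpow (by positivity) (by positivity), ← Real.rpow_mul (by linarith),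
          show (2 * B)⁻¹ * B = 1 / 2 by field_simp, Real.sqrt_eq_rpow]

theorem Real.pow_four_mul_rpow_neg_le {L B d : ℝ} (hL : 0 < L) (hd : 0 ≤ d) (hdL : d ≤ L ^ B) :
    d ^ 4 * L ^ (-(5 * B)) ≤ L ^ (-B) :=
  calc d ^ 4 * L ^ (-(5 * B)) ≤ (L ^ B) ^ 4 * L ^ (-(5 * B)) := by gcongr
    _ = L ^ (-B) := by
        rw [← Real.rpow_natCast, ← Real.rpow_mul hL.le, ← Real.rpow_add hL]
        norm_num
        ring_nf

theorem Real.two_sqrt_add_one_mul_le_of_log_rpow_lt {X B d : ℝ} (hX : 1 < X) (hB : 0 < B)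
    (hd : Real.log X ^ B < d) :
    (2 * √X + 1) * (2 * (√X / d) + 1) ≤ (6 + 3 * (2 * B) ^ B) * X * Real.log X ^ (-B) := by
  have hL : 0 < Real.log X ^ B := Real.rpow_pos_of_pos (Real.log_pos hX) B
  have hd0 : 0 < d := hL.trans hd
  have hs1 : 1 ≤ √X := Real.one_le_sqrt.2 hX.le
  have hss : √X * √X = X := Real.mul_self_sqrt (by linarith)
  have hXd : X / d ≤ X * Real.log X ^ (-B) := by
    rw [Real.rpow_neg (Real.log_nonneg hX.le), ← div_eq_mul_inv]
    exact div_le_div_of_nonneg_left (by linarith) hL hd.le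
  have hsqrt : √X ≤ (2 * B) ^ B * X * Real.log X ^ (-B) := by
    rw [Real.rpow_neg (Real.log_nonneg hX.le), ← div_eq_mul_inv, le_div_iff₀ hL]
    calc √X * Real.log X ^ B ≤ √X * ((2 * B) ^ B * √X) :=
          mul_le_mul_of_nonneg_left (Real.log_rpow_le_mul_sqrt hX.le hB) (by positivity)
      _ = (2 * B) ^ B * X := by linear_combination (2 * B) ^ B * hss
  calc (2 * √X + 1) * (2 * (√X / d) + 1) ≤ 3 * √X * (2 * (√X / d) + 1) := by gcongr; linarith
    _ = 6 * (X / d) + 3 * √X := by linear_combination (6 / d) * hss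
    _ ≤ (6 + 3 * (2 * B) ^ B) * X * Real.log X ^ (-B) := by nlinarith

theorem GaussianInt.norm_sum_ite_dvd_sub_and_dvd_im_le_log_rpow {s : Finset GaussianInt}
    {f : GaussianInt → ℂ} {X B K E : ℝ} (hX : 1 < X) (hB : 0 < B) (hK : 0 ≤ K) (hE : 1 ≤ E)
    (hs : ∀ z ∈ s, (z.norm : ℝ) ≤ X) (hf : ∀ z, ‖f z‖ ≤ 1)
    (hA : ∀ m : ℕ, 0 < m → ∀ β : GaussianInt,
      ‖∑ z ∈ s, if (m : GaussianInt) ∣ z - β then f z else 0‖ ≤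
        K * E * X * Real.log X ^ (-(5 * B)) * m ^ 2)
    {ℓ d : ℕ} (hℓ : 0 < ℓ) (hd : 0 < d) (α : GaussianInt) :
    ‖∑ z ∈ s, if (ℓ : GaussianInt) ∣ z - α ∧ (d : ℤ) ∣ z.im then f z else 0‖ ≤
      (K + 6 + 3 * (2 * B) ^ B) * ℓ ^ 2 * E * X * Real.log X ^ (-B) := by
  have hL : 0 < Real.log X := Real.log_pos hX
  have hℓ1 : (1 : ℝ) ≤ ℓ ^ 2 := one_le_pow₀ (by exact_mod_cast hℓ)
  rcases le_or_gt (d : ℝ) (Real.log X ^ B) with hsmall | hlarge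
  · calc _ ≤ (d : ℝ) ^ 2 * (K * E * X * Real.log X ^ (-(5 * B)) * (ℓ * d) ^ 2) :=
          GaussianInt.norm_sum_ite_dvd_sub_and_dvd_im_le hA hℓ hd α
      _ = K * ℓ ^ 2 * E * X * ((d : ℝ) ^ 4 * Real.log X ^ (-(5 * B))) := by ring
      _ ≤ K * ℓ ^ 2 * E * X * Real.log X ^ (-B) := by
          gcongr
          exact Real.pow_four_mul_rpow_neg_le hL (Nat.cast_nonneg d) hsmall
      _ ≤ (K + 6 + 3 * (2 * B) ^ B) * ℓ ^ 2 * E * X * Real.log X ^ (-B) := by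
          gcongr
          linarith [Real.rpow_nonneg (by linarith : (0 : ℝ) ≤ 2 * B) B]
  · calc _ ≤ (#{z ∈ s | (d : ℤ) ∣ z.im} : ℝ) :=
          Finset.norm_sum_ite_and_le_card_filter s (fun z => (ℓ : GaussianInt) ∣ z - α) _ hf
      _ ≤ (2 * √X + 1) * (2 * (√X / d) + 1) := GaussianInt.card_filter_dvd_im_le hs hd
      _ ≤ (6 + 3 * (2 * B) ^ B) * X * Real.log X ^ (-B) :=
          Real.two_sqrt_add_one_mul_le_of_log_rpow_lt hX hB hlarge
      _ = (6 + 3 * (2 * B) ^ B) * 1 * (X * Real.log X ^ (-B)) := by ring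
      _ ≤ (K + 6 + 3 * (2 * B) ^ B) * (ℓ ^ 2 * E) * (X * Real.log X ^ (-B)) := by
          gcongr
          · linarith
          · exact one_le_mul_of_one_le_of_one_le hℓ1 hE
      _ = (K + 6 + 3 * (2 * B) ^ B) * ℓ ^ 2 * E * X * Real.log X ^ (-B) := by ring

theorem finsum_ite_eq_sum_ite {α M : Type*} [AddCommMonoid M] {f : α → M} {s : Finset α}
    (h : f.support ⊆ s) (P : α → Prop) [DecidablePred P] :
    ∑ᶠ a, (if P a then f a else 0) = ∑ a ∈ s, if P a then f a else 0 :=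
  finsum_eq_sum_of_support_subset _ fun a ha => h fun hfa => ha (by simp [hfa])

def twistedCoeff (c : GaussianInt → ℂ) (k : ℕ) (t : ℝ) (z : GaussianInt) : ℂ :=
  c z * (conj (GaussianInt.toComplex z) / GaussianInt.toComplex z) ^ k *
    (‖GaussianInt.toComplex z‖ : ℂ) ^ ((t : ℂ) * Complex.I)

theorem twistedCoeff_eq_zero {c : GaussianInt → ℂ} {z : GaussianInt} (hz : c z = 0)
    (k : ℕ) (t : ℝ) : twistedCoeff c k t z = 0 := by
  simp [twistedCoeff, hz]

theorem norm_twistedCoeff_le (c : GaussianInt → ℂ) (k : ℕ) (t : ℝ) (z : GaussianInt) :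
    ‖twistedCoeff c k t z‖ ≤ ‖c z‖ := by
  rcases eq_or_ne z 0 with rfl | hz
  · have hcpow : ‖(0 : ℂ) ^ ((t : ℂ) * Complex.I)‖ ≤ 1 := by
      rw [Complex.cpow_def]; split_ifs <;> simp
    simp only [twistedCoeff, map_zero, div_zero, norm_mul, norm_pow, norm_zero, Complex.ofReal_zero]
    calc _ ≤ ‖c 0‖ * 1 * 1 := by gcongr; exact pow_le_one₀ le_rfl zero_le_one
      _ = ‖c 0‖ := by ring
  · have hz' : 0 < ‖GaussianInt.toComplex z‖ := by simpa using hz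
    simp [twistedCoeff, Complex.norm_cpow_eq_rpow_re_of_pos hz', hz'.ne']

theorem support_twistedCoeff_subset (c : GaussianInt → ℂ) (k : ℕ) (t : ℝ) :
    (twistedCoeff c k t).support ⊆ c.support :=
  fun _ hz hc => hz (twistedCoeff_eq_zero hc k t)

theorem SWCond.norm_sum_twistedCoeff_le {c : GaussianInt → ℂ} {X B K : ℝ} (h : SWCond c X B K)
    (hc0 : c 0 = 0) {s : Finset GaussianInt} (hs : c.support ⊆ s) (k : ℕ) {m : ℕ} (hm : 0 < m)
    (β : GaussianInt) (t : ℝ) :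
    ‖∑ z ∈ s, if (m : GaussianInt) ∣ z - β then twistedCoeff c k t z else 0‖ ≤
      K * ((k : ℝ) ^ 2 + 1) * (t ^ 2 + 1) * X * Real.log X ^ (-B) * m ^ 2 := by
  have hSW : ‖∑ᶠ z, if z ≠ 0 ∧ (m : GaussianInt) ∣ z - β then twistedCoeff c k t z else 0‖ ≤
      K * m ^ 2 * ((k : ℝ) ^ 2 + 1) * (t ^ 2 + 1) * X * Real.log X ^ (-B) := h k m hm β t
  rw [finsum_ite_eq_sum_ite ((support_twistedCoeff_subset c k t).trans hs)] at hSW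
  have hdrop : ∀ z, (if z ≠ 0 ∧ (m : GaussianInt) ∣ z - β then twistedCoeff c k t z else 0) =
      if (m : GaussianInt) ∣ z - β then twistedCoeff c k t z else 0 := by
    intro z
    rcases eq_or_ne z 0 with rfl | hz
    · simp [twistedCoeff_eq_zero hc0]
    · simp [hz]
  simp only [hdrop] at hSW
  exact hSW.trans_eq (by ring)

/-- **Generalized Siegel–Walfisz condition (4.2).** For every `B > 0` there is `B' > 0` such
that for every `K ≥ 1` there is `C = C(B,K)` with:  if `c` is supported on Gaussian integers
with `1 < |z|² ≤ X`, `|c(z)| ≤ 1`, and `c` satisfies the Siegel–Walfisz condition with exponent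
`B'` and constant `K`, then for all `e ≥ 1`, `k ≥ 0`, `ℓ ≥ 1`, `α ∈ ℤ[i]`, `t ∈ ℝ`,
`|∑_{z ≡ α (ℓ), (v,e)=1} c(z)(conj z/z)^k |z|^{it}| ≤ C τ(e) ℓ² (k²+1)(t²+1) X (log X)^{-B}`. -/
theorem generalized_siegel_walfisz :
    ∀ B : ℝ, 0 < B → ∃ B' : ℝ, 0 < B' ∧ ∀ K : ℝ, 1 ≤ K → ∃ C : ℝ,
      ∀ (X : ℝ) (c : GaussianInt → ℂ), 2 ≤ X →
        (∀ z : GaussianInt, c z ≠ 0 → 1 < (Zsqrtd.norm z : ℝ) ∧ (Zsqrtd.norm z : ℝ) ≤ X) →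
        (∀ z, ‖c z‖ ≤ 1) → SWCond c X B' K →
        ∀ (e k ℓ : ℕ), 1 ≤ e → 1 ≤ ℓ → ∀ (α : GaussianInt) (t : ℝ),
          ‖∑ᶠ z : GaussianInt,
              if (ℓ : GaussianInt) ∣ (z - α) ∧ Int.gcd z.im e = 1 then
                c z * (conj (GaussianInt.toComplex z) / GaussianInt.toComplex z) ^ k *
                  (‖GaussianInt.toComplex z‖ : ℂ) ^ ((t : ℂ) * Complex.I)
              else 0‖
            ≤ C * (e.divisors.card : ℝ) * (ℓ : ℝ) ^ 2 * ((k : ℝ) ^ 2 + 1) * (t ^ 2 + 1) * X *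
                Real.log X ^ (-B) := by
  intro B hB
  refine ⟨5 * B, by positivity, fun K hK => ⟨K + 6 + 3 * (2 * B) ^ B, ?_⟩⟩
  intro X c hX hsupp hbd hSW e k ℓ he hℓ α t
  have hfin := GaussianInt.finite_setOf_norm_le X
  set s := hfin.toFinset
  have hs : ∀ z ∈ s, (z.norm : ℝ) ≤ X := fun z hz => hfin.mem_toFinset.1 hz
  have hcs : c.support ⊆ s := fun z hz => hfin.mem_toFinset.2 (hsupp z hz).2
  have hc0 : c 0 = 0 := by_contra fun h => absurd (hsupp 0 h).1 (by norm_num)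
  have hE : (1 : ℝ) ≤ ((k : ℝ) ^ 2 + 1) * (t ^ 2 + 1) :=
    one_le_mul_of_one_le_of_one_le (by nlinarith) (by nlinarith)
  have hd : ∀ d ∈ e.divisors, ‖∑ z ∈ s, if (ℓ : GaussianInt) ∣ z - α ∧ (d : ℤ) ∣ z.im
      then twistedCoeff c k t z else 0‖ ≤
        (K + 6 + 3 * (2 * B) ^ B) * ℓ ^ 2 * (((k : ℝ) ^ 2 + 1) * (t ^ 2 + 1)) * X *
          Real.log X ^ (-B) := fun d hd =>
    GaussianInt.norm_sum_ite_dvd_sub_and_dvd_im_le_log_rpow (by linarith) hB (by linarith) hE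
      hs (fun z => (norm_twistedCoeff_le c k t z).trans (hbd z))
      (fun m hm β => (hSW.norm_sum_twistedCoeff_le hc0 hcs k hm β t).trans_eq (by ring)) hℓ
      (Nat.pos_of_mem_divisors hd) α
  change ‖∑ᶠ z, if (ℓ : GaussianInt) ∣ z - α ∧ Int.gcd z.im e = 1
    then twistedCoeff c k t z else 0‖ ≤ _
  rw [finsum_ite_eq_sum_ite ((support_twistedCoeff_subset c k t).trans hcs),
    Finset.sum_ite_gcd_eq_one_eq_sum_moebius _ _ _ _ (by omega)]
  exact (Finset.norm_sum_moebius_mul_le hd).trans_eq (by ring)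
end
end
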